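/- arXiv:0704.0111 — 4 statements merged into one kernel-verified Lean document; each statement's English description precedes it below -/
import Mathlib

section
/- Let A be a Hopf algebra over ℂ, let ξ : A → ℂ be a linear functional and let τ : A → ℂ be a trace (i.e. τ(ab) = τ(ba) for all a, b ∈ A). Then (∂ξ) * τ = ∂(ξ * τ), where ∂ is the Hochschild coboundary from linear to bilinear functionals, (∂η)(a,b) = η(ab) − η(ba). Explicitly, for all a₀, a₁ ∈ A: ((∂ξ) * τ)(a₀, a₁) = (ξ * τ)(a₀a₁) − (ξ * τ)(a₁a₀). -/
theorem statement0_general {A : Type*} [Ring A] [HopfAlgebra ℂ A]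
    (ξ τ : A →ₗ[ℂ] ℂ) (hτ : ∀ a b : A, τ (a * b) = τ (b * a))
    {ι κ : Type*} (s : Finset ι) (t : Finset κ)
    (x x' : ι → A) (y y' : κ → A) :
    (∑ i ∈ s, ∑ j ∈ t, (ξ (x i * y j) - ξ (y j * x i)) * τ (x' i * y' j))
      = (∑ i ∈ s, ∑ j ∈ t, ξ (x i * y j) * τ (x' i * y' j))
        - (∑ i ∈ s, ∑ j ∈ t, ξ (y j * x i) * τ (y' j * x' i)) := by
  simp only [sub_mul, Finset.sum_sub_distrib, hτ (y' _)]

/-- Let `A` be a Hopf algebra over `ℂ`, `ξ : A → ℂ` a linear functional and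
`τ : A → ℂ` a trace (`τ (a*b) = τ (b*a)`).  Writing the comultiplications of `a₀` and `a₁` in
Sweedler form `Δ a₀ = ∑ i ∈ s, x i ⊗ x' i` and `Δ a₁ = ∑ j ∈ t, y j ⊗ y' j`, the convolution of
the Hochschild coboundary `∂ξ` (with `(∂ξ)(a,b) = ξ(ab) - ξ(ba)`) with `τ` satisfies
`(∂ξ) * τ = ∂(ξ * τ)`; explicitly, using that `Δ(a₀a₁) = ∑ x i * y j ⊗ x' i * y' j` and
`Δ(a₁a₀) = ∑ y j * x i ⊗ y' j * x' i`,
`((∂ξ) * τ)(a₀,a₁) = (ξ * τ)(a₀a₁) - (ξ * τ)(a₁a₀)`. -/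
theorem statement0 {A : Type*} [Ring A] [HopfAlgebra ℂ A]
    (ξ τ : A →ₗ[ℂ] ℂ) (hτ : ∀ a b : A, τ (a * b) = τ (b * a))
    (a₀ a₁ : A) {ι κ : Type*} (s : Finset ι) (t : Finset κ)
    (x x' : ι → A) (y y' : κ → A)
    (h₀ : Coalgebra.comul (R := ℂ) a₀ = ∑ i ∈ s, x i ⊗ₜ[ℂ] x' i)
    (h₁ : Coalgebra.comul (R := ℂ) a₁ = ∑ j ∈ t, y j ⊗ₜ[ℂ] y' j) :
    (∑ i ∈ s, ∑ j ∈ t, (ξ (x i * y j) - ξ (y j * x i)) * τ (x' i * y' j))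
      = (∑ i ∈ s, ∑ j ∈ t, ξ (x i * y j) * τ (x' i * y' j))
        - (∑ i ∈ s, ∑ j ∈ t, ξ (y j * x i) * τ (y' j * x' i)) :=
  statement0_general ξ τ hτ s t x x' y y'
end

section
/- Let A be a unital associative algebra over ℂ and σ an algebra automorphism of A. Then B and b anticommute on σ-invariant cochains: for every n ≥ 1 and every σ-invariant (n+1)-linear functional f on A, B_{n+1}(b_n f) + b_{n−1}(B_n f) = 0, where B_n = N_{n−1} U_n (T_n − I) and b_n = Σ_{j=0}^{n+1} T_{n+1}^{n+1−j} V_n T_nʲ. -/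
variable {A : Type*} [Ring A] [Algebra ℂ A]

/-- A (not necessarily multilinear) `m`-cochain `f : A^m → ℂ` is `σ`-invariant if
`f(σ(a₀), …, σ(a_{m-1})) = f(a₀, …, a_{m-1})`. -/
def TwistedInvariant (σ : A ≃ₐ[ℂ] A) {m : ℕ} (f : (Fin m → A) → ℂ) : Prop :=
  ∀ a : Fin m → A, f (fun i => σ (a i)) = f a

/-- The twisted cyclic permutation operator
`(T_n f)(a₀, …, a_n) = (-1)^n f(σ(a_n), a₀, …, a_{n-1})`. -/
noncomputable def Tcyc (σ : A ≃ₐ[ℂ] A) (n : ℕ) (f : (Fin (n + 1) → A) → ℂ) :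
    (Fin (n + 1) → A) → ℂ :=
  fun a => (-1 : ℂ) ^ n * f (Fin.cases (σ (a (Fin.last n))) (fun i => a i.castSucc))

/-- The operator `(U_n f)(a₀, …, a_{n-1}) = (-1)^n f(a₀, …, a_{n-1}, 1)`. -/
def Ucyc (n : ℕ) (f : (Fin (n + 1) → A) → ℂ) : (Fin n → A) → ℂ :=
  fun a => (-1 : ℂ) ^ n * f (Fin.snoc a 1)

/-- The operator `(V_n f)(a₀, …, a_{n+1}) = (-1)^(n+1) f(σ(a_{n+1})a₀, a₁, …, a_n)`. -/
noncomputable def Vcyc (σ : A ≃ₐ[ℂ] A) (n : ℕ) (f : (Fin (n + 1) → A) → ℂ) :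
    (Fin (n + 2) → A) → ℂ :=
  fun a => (-1 : ℂ) ^ (n + 1) *
    f (Fin.cases (σ (a (Fin.last (n + 1))) * a 0) (fun i : Fin n => a i.succ.castSucc))

/-- The operator `N_n = ∑_{j=0}^{n} T_n^j`. -/
noncomputable def Ncyc (σ : A ≃ₐ[ℂ] A) (n : ℕ) (f : (Fin (n + 1) → A) → ℂ) :
    (Fin (n + 1) → A) → ℂ :=
  fun a => ∑ j ∈ Finset.range (n + 1), (Tcyc σ n)^[j] f a

/-- The operator `B_{n+1} = N_n U_{n+1} (T_{n+1} - I) : C^{n+1} → C^n`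
(indexed here so that `Bcyc σ n` is the paper's `B_{n+1}`). -/
noncomputable def Bcyc (σ : A ≃ₐ[ℂ] A) (n : ℕ) (f : (Fin (n + 2) → A) → ℂ) :
    (Fin (n + 1) → A) → ℂ :=
  Ncyc σ n (Ucyc (n + 1) (Tcyc σ (n + 1) f - f))

/-- The operator `b_n = ∑_{j=0}^{n+1} T_{n+1}^{n+1-j} V_n T_n^j : C^n → C^{n+1}`. -/
noncomputable def bcyc (σ : A ≃ₐ[ℂ] A) (n : ℕ) (f : (Fin (n + 1) → A) → ℂ) :
    (Fin (n + 2) → A) → ℂ :=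
  fun a => ∑ j ∈ Finset.range (n + 2),
    (Tcyc σ (n + 1))^[n + 1 - j] (Vcyc σ n ((Tcyc σ n)^[j] f)) a

/-!
On `σ`-invariant cochains `T^(k+1) = 1`, and this turns `b` into the twisted Hochschild
coboundary `∑_{i ≤ k+1} (-1)^i δ_i` (whose top face multiplies `σ(a_{k+1})` into `a₀`). With
`b' = ∑_{i ≤ k} (-1)^i δ_i`, the classical identities `(T - 1) b = b' (T - 1)` and `b N = N b'`
follow from `T δ_{i+1} = -δ_i T`, and appending a `1` is a contracting homotopy for `b'`:
`U b' + b' U = -1`. Hence `B b + b B = N (U b' + b' U) (T - 1) = N (1 - T) = 0`.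
-/

namespace TwistedCyclic

variable (σ : A ≃ₐ[ℂ] A)

def twistedRotate (k : ℕ) (a : Fin (k + 1) → A) : Fin (k + 1) → A :=
  Fin.cases (σ (a (Fin.last k))) (fun i => a i.castSucc)

/-- The face of index `k + 1` is the twisted one, `(σ(a_{k+1}) a₀, a₁, …, a_k)`. -/
def face (k i : ℕ) (a : Fin (k + 2) → A) : Fin (k + 1) → A :=
  if h : i ≤ k then Fin.contractNth ⟨i, by omega⟩ (· * ·) a
  else Fin.contractNth 0 (· * ·) (twistedRotate σ (k + 1) a)

variable {σ}

lemma twistedRotate_iterate_apply {k j : ℕ} (hj : j ≤ k + 1) (a : Fin (k + 1) → A)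
    (i : Fin (k + 1)) :
    (twistedRotate σ k)^[j] a i =
      if h : (i : ℕ) < j then σ (a ⟨i + (k + 1) - j, by omega⟩) else a ⟨i - j, by omega⟩ := by
  induction j generalizing i with
  | zero => simp
  | succ j ih =>
    rw [Function.iterate_succ_apply']
    cases i using Fin.cases with
    | zero =>
      simp only [twistedRotate, Fin.cases_zero, ih (by omega), Fin.val_last]
      rw [dif_neg (by omega), dif_pos (by simp)]
      congr 2
      ext; simp
    | succ t =>
      simp only [twistedRotate, Fin.cases_succ, ih (by omega), Fin.val_castSucc, Fin.val_succ]
      by_cases h : (t : ℕ) < j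
      · rw [dif_pos h, dif_pos (by omega)]
        congr 2; ext; simp; omega
      · rw [dif_neg h, dif_neg (by omega)]
        congr 1; ext; simp

lemma twistedRotate_iterate_succ_self (k : ℕ) (a : Fin (k + 1) → A) :
    (twistedRotate σ k)^[k + 1] a = fun i => σ (a i) := by
  funext i
  rw [twistedRotate_iterate_apply le_rfl, dif_pos i.isLt]
  congr 2; ext; simp

lemma twistedRotate_map (k : ℕ) (a : Fin (k + 1) → A) :
    twistedRotate σ k (fun i => σ (a i)) = fun i => σ (twistedRotate σ k a i) := by
  funext i
  cases i using Fin.cases <;> rfl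

lemma face_map (k i : ℕ) (a : Fin (k + 2) → A) :
    face σ k i (fun j => σ (a j)) = fun j => σ (face σ k i a j) := by
  funext j
  unfold face
  split_ifs
  · simp only [Fin.contractNth]; split_ifs <;> simp
  · rw [twistedRotate_map]; simp only [Fin.contractNth]; split_ifs <;> simp

lemma face_of_le {k i : ℕ} (hi : i ≤ k) (a : Fin (k + 2) → A) :
    face σ k i a = Fin.contractNth ⟨i, by omega⟩ (· * ·) a :=
  dif_pos hi

lemma face_succ_self (k : ℕ) (a : Fin (k + 2) → A) :
    face σ k (k + 1) a = Fin.contractNth 0 (· * ·) (twistedRotate σ (k + 1) a) :=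
  dif_neg (by omega)

lemma face_succ_twistedRotate {k i : ℕ} (hi : i ≤ k) (a : Fin (k + 2) → A) :
    face σ k (i + 1) (twistedRotate σ (k + 1) a) = twistedRotate σ k (face σ k i a) := by
  funext j
  rcases hi.lt_or_eq with hik | rfl
  · rw [face_of_le hik, face_of_le hi]
    cases j using Fin.cases with
    | zero =>
      simp only [Fin.contractNth, twistedRotate, Fin.cases_zero, Fin.val_zero, Fin.val_last]
      split_ifs <;> first | omega | rfl
    | succ t =>
      simp only [Fin.contractNth, twistedRotate, Fin.cases_succ, Fin.val_succ, Fin.val_castSucc,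
        ← Fin.succ_castSucc]
      split_ifs <;> first | omega | rfl
  · rw [face_succ_self, face_of_le le_rfl]
    cases j using Fin.cases with
    | zero =>
      simp [Fin.contractNth, twistedRotate, -Fin.succ_zero_eq_one, -Fin.succ_zero_eq_one',
        ← Fin.succ_last]
    | succ t => simp [Fin.contractNth, twistedRotate]

lemma face_zero_twistedRotate (k : ℕ) (a : Fin (k + 2) → A) :
    face σ k 0 (twistedRotate σ (k + 1) a) = face σ k (k + 1) a := by
  rw [face_of_le (Nat.zero_le k), face_succ_self]; rfl

lemma face_snoc_one {k i : ℕ} (hi : i ≤ k) (a : Fin (k + 2) → A) :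
    face σ (k + 1) i (Fin.snoc a 1) = Fin.snoc (face σ k i a) 1 := by
  rw [face_of_le (by omega), face_of_le hi]
  funext j
  cases j using Fin.lastCases with
  | last =>
    rw [Fin.contractNth_apply_of_gt _ _ _ _ (by simpa using Nat.lt_succ_of_le hi)]
    simp
  | cast t => simp [Fin.contractNth, Fin.succ_castSucc, -Fin.castSucc_succ]

lemma face_last_snoc_one (k : ℕ) (a : Fin (k + 2) → A) :
    face σ (k + 1) (k + 1) (Fin.snoc a 1) = a := by
  rw [face_of_le le_rfl]
  funext j
  cases j using Fin.lastCases with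
  | last => simp [Fin.contractNth]
  | cast t => rw [Fin.contractNth_apply_of_lt _ _ _ _ (by simpa using t.is_lt)]; simp

lemma snoc_one_map {k : ℕ} (a : Fin k → A) :
    (Fin.snoc (fun i => σ (a i)) 1 : Fin (k + 1) → A) =
      fun i => σ ((Fin.snoc a 1 : Fin (k + 1) → A) i) := by
  funext i
  cases i using Fin.lastCases <;> simp

variable (σ) in
def invariants (m : ℕ) : Submodule ℂ ((Fin m → A) → ℂ) where
  carrier := {x | TwistedInvariant σ x}
  add_mem' hx hy a := by simp only [Pi.add_apply, hx a, hy a]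
  zero_mem' _ := rfl
  smul_mem' c x hx a := by simp only [Pi.smul_apply, hx a]

lemma funLeft_mem_invariants {m m' : ℕ} {φ : (Fin m' → A) → Fin m → A}
    (hφ : ∀ a, φ (fun i => σ (a i)) = fun i => σ (φ a i)) {x : (Fin m → A) → ℂ}
    (hx : x ∈ invariants σ m) : LinearMap.funLeft ℂ ℂ φ x ∈ invariants σ m' := fun a => by
  simp only [LinearMap.funLeft_apply, hφ]
  exact hx (φ a)

lemma Ucyc_mem_invariants {n : ℕ} {g : (Fin (n + 1) → A) → ℂ} (hg : g ∈ invariants σ (n + 1)) :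
    Ucyc n g ∈ invariants σ n :=
  Submodule.smul_mem _ ((-1 : ℂ) ^ n) (funLeft_mem_invariants snoc_one_map hg)

variable (σ) in
def cyc (k : ℕ) : Module.End ℂ ((Fin (k + 1) → A) → ℂ) :=
  (-1 : ℂ) ^ k • LinearMap.funLeft ℂ ℂ (twistedRotate σ k)

lemma coe_cyc (k : ℕ) : ⇑(cyc σ k) = Tcyc σ k := rfl

lemma cyc_apply (k : ℕ) (x : (Fin (k + 1) → A) → ℂ) (a : Fin (k + 1) → A) :
    cyc σ k x a = (-1) ^ k * x (twistedRotate σ k a) := rfl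

lemma cyc_pow_apply (k j : ℕ) (x : (Fin (k + 1) → A) → ℂ) (a : Fin (k + 1) → A) :
    (cyc σ k ^ j) x a = (-1) ^ (k * j) * x ((twistedRotate σ k)^[j] a) := by
  induction j generalizing a with
  | zero => simp
  | succ j ih =>
    rw [pow_succ', Module.End.mul_apply, cyc_apply, ih, ← Function.iterate_succ_apply, mul_add,
      pow_add]
    ring

lemma cyc_mem_invariants {k : ℕ} {x : (Fin (k + 1) → A) → ℂ} (hx : x ∈ invariants σ (k + 1)) :
    cyc σ k x ∈ invariants σ (k + 1) :=
  Submodule.smul_mem _ _ (funLeft_mem_invariants (twistedRotate_map k) hx)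

lemma cyc_pow_mem_invariants {k : ℕ} {x : (Fin (k + 1) → A) → ℂ}
    (hx : x ∈ invariants σ (k + 1)) (j : ℕ) : (cyc σ k ^ j) x ∈ invariants σ (k + 1) := by
  induction j with
  | zero => exact hx
  | succ j ih => rw [pow_succ', Module.End.mul_apply]; exact cyc_mem_invariants ih

lemma cyc_pow_succ_self_apply {k : ℕ} {x : (Fin (k + 1) → A) → ℂ}
    (hx : x ∈ invariants σ (k + 1)) : (cyc σ k ^ (k + 1)) x = x := by
  funext a
  rw [cyc_pow_apply, twistedRotate_iterate_succ_self, hx a,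
    (Nat.even_mul_succ_self k).neg_one_pow, one_mul]

variable (σ) in
def cycNorm (k : ℕ) : Module.End ℂ ((Fin (k + 1) → A) → ℂ) :=
  ∑ j ∈ Finset.range (k + 1), cyc σ k ^ j

lemma cycNorm_apply (k : ℕ) (x : (Fin (k + 1) → A) → ℂ) :
    cycNorm σ k x = ∑ j ∈ Finset.range (k + 1), (cyc σ k ^ j) x :=
  LinearMap.sum_apply _ _ _

lemma coe_cycNorm (k : ℕ) : ⇑(cycNorm σ k) = Ncyc σ k := by
  funext x a
  simp [cycNorm, Ncyc, LinearMap.sum_apply, Finset.sum_apply, Module.End.pow_apply, coe_cyc]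

lemma cycNorm_mem_invariants {k : ℕ} {x : (Fin (k + 1) → A) → ℂ}
    (hx : x ∈ invariants σ (k + 1)) : cycNorm σ k x ∈ invariants σ (k + 1) := by
  rw [cycNorm, LinearMap.sum_apply]
  exact Submodule.sum_mem _ fun j _ => cyc_pow_mem_invariants hx j

lemma cycNorm_cyc_apply {k : ℕ} {x : (Fin (k + 1) → A) → ℂ} (hx : x ∈ invariants σ (k + 1)) :
    cycNorm σ k (cyc σ k x) = cycNorm σ k x := by
  simp only [cycNorm, LinearMap.sum_apply, ← Module.End.mul_apply, ← pow_succ]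
  rw [Finset.sum_range_succ, cyc_pow_succ_self_apply hx, Finset.sum_range_succ' _ k, pow_zero,
    Module.End.one_apply]

lemma cycNorm_cyc_pow_apply {k : ℕ} {x : (Fin (k + 1) → A) → ℂ} (hx : x ∈ invariants σ (k + 1))
    (j : ℕ) : cycNorm σ k ((cyc σ k ^ j) x) = cycNorm σ k x := by
  induction j with
  | zero => rfl
  | succ j ih =>
    rw [pow_succ', Module.End.mul_apply, cycNorm_cyc_apply (cyc_pow_mem_invariants hx j), ih]

lemma cyc_pow_cycNorm_apply {k : ℕ} {x : (Fin (k + 1) → A) → ℂ} (hx : x ∈ invariants σ (k + 1))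
    (j : ℕ) : (cyc σ k ^ j) (cycNorm σ k x) = cycNorm σ k x := by
  have hcomm : cyc σ k * cycNorm σ k = cycNorm σ k * cyc σ k :=
    Commute.sum_right _ _ _ fun j _ => Commute.self_pow _ j
  have hfix : cyc σ k (cycNorm σ k x) = cycNorm σ k x := by
    rw [← Module.End.mul_apply, hcomm, Module.End.mul_apply, cycNorm_cyc_apply hx]
  rw [Module.End.pow_apply, Function.iterate_fixed hfix]

variable (σ) in
def coface (k i : ℕ) : ((Fin (k + 1) → A) → ℂ) →ₗ[ℂ] (Fin (k + 2) → A) → ℂ :=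
  LinearMap.funLeft ℂ ℂ (face σ k i)

lemma coface_apply (k i : ℕ) (x : (Fin (k + 1) → A) → ℂ) (a : Fin (k + 2) → A) :
    coface σ k i x a = x (face σ k i a) := rfl

lemma coface_mem_invariants {k : ℕ} (i : ℕ) {x : (Fin (k + 1) → A) → ℂ}
    (hx : x ∈ invariants σ (k + 1)) : coface σ k i x ∈ invariants σ (k + 2) :=
  funLeft_mem_invariants (face_map k i) hx

lemma cyc_coface_succ {k i : ℕ} (hi : i ≤ k) (x : (Fin (k + 1) → A) → ℂ) :
    cyc σ (k + 1) (coface σ k (i + 1) x) = -coface σ k i (cyc σ k x) := by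
  funext a
  simp only [cyc_apply, coface_apply, face_succ_twistedRotate hi, Pi.neg_apply, pow_succ]
  ring

lemma cyc_coface_zero (k : ℕ) (x : (Fin (k + 1) → A) → ℂ) :
    cyc σ (k + 1) (coface σ k 0 x) = (-1 : ℂ) ^ (k + 1) • coface σ k (k + 1) x := by
  funext a
  rw [cyc_apply, coface_apply, face_zero_twistedRotate]
  rfl

lemma Vcyc_eq_cyc_coface_zero (k : ℕ) (x : (Fin (k + 1) → A) → ℂ) :
    Vcyc σ k x = cyc σ (k + 1) (coface σ k 0 x) := by
  funext a
  rw [cyc_apply, coface_apply, face_zero_twistedRotate, face_succ_self]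
  show (-1 : ℂ) ^ (k + 1) * x _ = _
  congr 2
  funext j
  cases j using Fin.cases with
  | zero => rfl
  | succ t => simp [Fin.contractNth, twistedRotate]

lemma cyc_pow_coface {k j : ℕ} (hj : j ≤ k + 1) (x : (Fin (k + 1) → A) → ℂ) :
    (cyc σ (k + 1) ^ j) (coface σ k j x) = (-1 : ℂ) ^ j • coface σ k 0 ((cyc σ k ^ j) x) := by
  induction j generalizing x with
  | zero => simp
  | succ j ih =>
    rw [pow_succ, Module.End.mul_apply, cyc_coface_succ (by omega), map_neg, ih (by omega),
      ← Module.End.mul_apply, ← pow_succ, pow_succ (-1 : ℂ), mul_neg_one, neg_smul]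

/-- `δ_j = (-1)^j T^{-j} δ_0 T^j` on invariant cochains, where `T^{-j} = T^(k+2-j)`. -/
lemma neg_one_pow_smul_coface {k j : ℕ} (hj : j ≤ k + 1) {x : (Fin (k + 1) → A) → ℂ}
    (hx : x ∈ invariants σ (k + 1)) :
    (-1 : ℂ) ^ j • coface σ k j x =
      (cyc σ (k + 1) ^ (k + 2 - j)) (coface σ k 0 ((cyc σ k ^ j) x)) := by
  have h : coface σ k 0 ((cyc σ k ^ j) x) =
      (-1 : ℂ) ^ j • (cyc σ (k + 1) ^ j) (coface σ k j x) := by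
    rw [cyc_pow_coface hj, smul_smul, ← pow_add, (Even.add_self j).neg_one_pow, one_smul]
  rw [h, map_smul, ← Module.End.mul_apply, ← pow_add, Nat.sub_add_cancel (by omega),
    cyc_pow_succ_self_apply (coface_mem_invariants j hx)]

variable (σ) in
def hochschild (k : ℕ) : ((Fin (k + 1) → A) → ℂ) →ₗ[ℂ] (Fin (k + 2) → A) → ℂ :=
  ∑ i ∈ Finset.range (k + 2), (-1 : ℂ) ^ i • coface σ k i

variable (σ) in
def bPrime (k : ℕ) : ((Fin (k + 1) → A) → ℂ) →ₗ[ℂ] (Fin (k + 2) → A) → ℂ :=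
  ∑ i ∈ Finset.range (k + 1), (-1 : ℂ) ^ i • coface σ k i

lemma hochschild_eq_bPrime_add (k : ℕ) :
    hochschild σ k = bPrime σ k + (-1 : ℂ) ^ (k + 1) • coface σ k (k + 1) :=
  Finset.sum_range_succ _ _

lemma cyc_hochschild (k : ℕ) (x : (Fin (k + 1) → A) → ℂ) :
    cyc σ (k + 1) (hochschild σ k x) =
      bPrime σ k (cyc σ k x) + (-1 : ℂ) ^ (k + 1) • coface σ k (k + 1) x := by
  simp only [hochschild, bPrime, LinearMap.sum_apply, LinearMap.smul_apply, map_sum, map_smul]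
  rw [Finset.sum_range_succ', pow_zero, one_smul, cyc_coface_zero]
  congr 1
  refine Finset.sum_congr rfl fun i hi => ?_
  rw [cyc_coface_succ (Finset.mem_range_succ_iff.mp hi), pow_succ, mul_neg_one,
    neg_smul, smul_neg, neg_neg]

lemma cyc_hochschild_sub (k : ℕ) (x : (Fin (k + 1) → A) → ℂ) :
    cyc σ (k + 1) (hochschild σ k x) - hochschild σ k x = bPrime σ k (cyc σ k x - x) := by
  rw [cyc_hochschild, hochschild_eq_bPrime_add, map_sub, LinearMap.add_apply,
    LinearMap.smul_apply]
  abel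

lemma bcyc_eq_sum (k : ℕ) (x : (Fin (k + 1) → A) → ℂ) :
    bcyc σ k x = ∑ j ∈ Finset.range (k + 2),
      (cyc σ (k + 1) ^ (k + 2 - j)) (coface σ k 0 ((cyc σ k ^ j) x)) := by
  funext a
  rw [bcyc, Finset.sum_apply]
  refine Finset.sum_congr rfl fun j hj => ?_
  have := Finset.mem_range.mp hj
  rw [← coe_cyc, ← coe_cyc, ← Module.End.coe_pow, ← Module.End.coe_pow, Vcyc_eq_cyc_coface_zero,
    ← Module.End.mul_apply, ← pow_succ, show k + 1 - j + 1 = k + 2 - j by omega]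

lemma bcyc_eq_hochschild {k : ℕ} {x : (Fin (k + 1) → A) → ℂ} (hx : x ∈ invariants σ (k + 1)) :
    bcyc σ k x = hochschild σ k x := by
  rw [bcyc_eq_sum, hochschild, LinearMap.sum_apply]
  refine Finset.sum_congr rfl fun j hj => ?_
  rw [LinearMap.smul_apply, neg_one_pow_smul_coface (Finset.mem_range_succ_iff.mp hj) hx]

lemma bcyc_cycNorm {k : ℕ} {y : (Fin (k + 1) → A) → ℂ} (hy : y ∈ invariants σ (k + 1)) :
    bcyc σ k (cycNorm σ k y) = cycNorm σ (k + 1) (bPrime σ k y) := by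
  set z := coface σ k 0 (cycNorm σ k y) with hz_def
  have hz : z ∈ invariants σ (k + 2) := coface_mem_invariants 0 (cycNorm_mem_invariants hy)
  have hb : bcyc σ k (cycNorm σ k y) = cycNorm σ (k + 1) z := by
    simp_rw [bcyc_eq_sum, cyc_pow_cycNorm_apply hy]
    calc ∑ j ∈ Finset.range (k + 2), (cyc σ (k + 1) ^ (k + 2 - j)) z
        = ∑ j ∈ Finset.range (k + 2), (cyc σ (k + 1) ^ (j + 1)) z := by
          rw [← Finset.sum_range_reflect]
          refine Finset.sum_congr rfl fun j hj => ?_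
          rw [show k + 2 - (k + 2 - 1 - j) = j + 1 by
            have := Finset.mem_range.mp hj; omega]
      _ = cycNorm σ (k + 1) (cyc σ (k + 1) z) := by
          simp only [cycNorm, LinearMap.sum_apply, pow_succ, Module.End.mul_apply]
      _ = cycNorm σ (k + 1) z := cycNorm_cyc_apply hz
  have hb' : cycNorm σ (k + 1) (bPrime σ k y) = cycNorm σ (k + 1) z := by
    calc cycNorm σ (k + 1) (bPrime σ k y)
        = ∑ i ∈ Finset.range (k + 1), cycNorm σ (k + 1) ((-1 : ℂ) ^ i • coface σ k i y) := by
          simp only [bPrime, LinearMap.sum_apply, LinearMap.smul_apply, map_sum]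
      _ = ∑ i ∈ Finset.range (k + 1), cycNorm σ (k + 1) (coface σ k 0 ((cyc σ k ^ i) y)) := by
          refine Finset.sum_congr rfl fun i hi => ?_
          rw [neg_one_pow_smul_coface (Finset.mem_range.mp hi).le hy,
            cycNorm_cyc_pow_apply (coface_mem_invariants 0 (cyc_pow_mem_invariants hy i))]
      _ = cycNorm σ (k + 1) z := by rw [hz_def, cycNorm_apply k y, map_sum, map_sum]
  rw [hb, hb']

lemma Ucyc_bPrime_add_bPrime_Ucyc (k : ℕ) (g : (Fin (k + 2) → A) → ℂ) :
    Ucyc (k + 2) (bPrime σ (k + 1) g) + bPrime σ k (Ucyc (k + 1) g) = -g := by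
  funext a
  have hc : ((-1 : ℂ) ^ (k + 1)) ^ 2 = 1 := by rw [← pow_mul, mul_comm, pow_mul]; simp
  simp only [Ucyc, bPrime, LinearMap.sum_apply, LinearMap.smul_apply, Finset.sum_apply,
    Pi.smul_apply, coface_apply, smul_eq_mul, Pi.add_apply, Pi.neg_apply]
  rw [Finset.sum_range_succ, face_last_snoc_one,
    Finset.sum_congr rfl fun i hi => by rw [face_snoc_one (Finset.mem_range_succ_iff.mp hi)]]
  simp only [mul_left_comm _ ((-1 : ℂ) ^ (k + 1)), ← Finset.mul_sum, pow_succ (-1 : ℂ) (k + 1)]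
  linear_combination (-g a) * hc

end TwistedCyclic

open TwistedCyclic in
/-- Let `A` be a unital associative algebra over `ℂ` and `σ` an algebra
automorphism of `A`.  Then `B` and `b` anticommute on `σ`-invariant cochains: for every paper
index `N ≥ 1` (written `N = n + 1` below, so `f ∈ C^N` is an `(n+2)`-linear functional) and
every `σ`-invariant `f`, `B_{N+1}(b_N f) + b_{N-1}(B_N f) = 0`, where
`B_N = N_{N-1} U_N (T_N - I)` and `b_N = ∑_{j=0}^{N+1} T_{N+1}^{N+1-j} V_N T_N^j`
(`Bcyc σ m` is the paper's `B_{m+1}`). -/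
theorem statement9 (σ : A ≃ₐ[ℂ] A) (n : ℕ)
    (f : MultilinearMap ℂ (fun _ : Fin (n + 2) => A) ℂ) (hf : TwistedInvariant σ ⇑f) :
    Bcyc σ (n + 1) (bcyc σ (n + 1) ⇑f) + bcyc σ n (Bcyc σ n ⇑f) = 0 := by
  have hf' : ⇑f ∈ invariants σ (n + 2) := hf
  have hg : cyc σ (n + 1) f - f ∈ invariants σ (n + 2) := sub_mem (cyc_mem_invariants hf') hf'
  simp only [Bcyc, ← coe_cyc, ← coe_cycNorm]
  rw [bcyc_eq_hochschild hf', cyc_hochschild_sub, bcyc_cycNorm (Ucyc_mem_invariants hg), ← map_add,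
    Ucyc_bPrime_add_bPrime_Ucyc, map_neg, map_sub, cycNorm_cyc_apply hf', sub_self, neg_zero]
end

section
/- Fix 0 < q < 1 and a positive integer r with q^{2r} < 1/2 < q^{2r−2}. Let x be a square-summable function on I = {(k,l) ∈ ℕ × ℕ : l ≤ k} such that for every (k,l) ∈ I, c(k,l)·x(k,l) + d(k−1,l−1)·x(k−1,l−1) = 0, where the second summand is interpreted as 0 when k = 0 or l = 0. Then x = 0. (Equivalently, the operator A of the paper, acting on the Hilbert space ℓ²(I) by A f_{k,l} = c(k,l) f_{k,l} + d(k,l) f_{k+1,l+1} on the orthonormal basis (f_{k,l}), has trivial kernel.) -/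
/-- The index set `I = {(k,l) ∈ ℕ × ℕ : l ≤ k}` labelling the orthonormal basis of the
subspace `ℋ₀` of `L²(SU_q(2))` (the pair `(k,l)` encodes `e^n_{n,j}` with `n = k/2`,
`j = (k-2l)/2`). -/
def IndexSet : Type := { p : ℕ × ℕ // p.2 ≤ p.1 }

/-- The diagonal coefficient `c(k,l) = 1 - q^(2r(k-l)) (1 - q^(2l))^r` of the operator `A`. -/
noncomputable def cCoeff (q : ℝ) (r k l : ℕ) : ℝ :=
  1 - q ^ (2 * r * (k - l)) * (1 - q ^ (2 * l)) ^ r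

/-- The off-diagonal coefficient
`d(k,l) = -q^((k-l)(2r+1)) (1 - q^(2l))^r (1 - q^(2(l-1)))^(1/2)` for `l ≥ 1`, `d(k,0) = 0`,
of the operator `A`. -/
noncomputable def dCoeff (q : ℝ) (r k l : ℕ) : ℝ :=
  if l = 0 then 0
  else -(q ^ ((k - l) * (2 * r + 1))) * (1 - q ^ (2 * l)) ^ r *
    Real.sqrt (1 - q ^ (2 * (l - 1)))


/-! The operator `A` is lower bidiagonal in the basis `f_{k,l}` with strictly positive diagonal
`c(k,l)`, so the kernel equations force `x(k,l) = 0` by induction on `l`: the off-diagonal term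
involves only the row `l - 1`, and it vanishes in the row `l = 0` because `d(k,0) = 0`. -/

theorem cCoeff_pos {q : ℝ} (hq0 : 0 < q) (hq1 : q < 1) {r : ℕ} (hr : 0 < r) (k l : ℕ) :
    0 < cCoeff q r k l := by
  have hfactor : q ^ (2 * r * (k - l)) ≤ 1 := pow_le_one₀ hq0.le hq1.le
  have hbase : (1 - q ^ (2 * l)) ^ r < 1 := by
    rcases Nat.eq_zero_or_pos l with rfl | hl
    · simp [zero_pow hr.ne']
    · have hpos : 0 < q ^ (2 * l) := pow_pos hq0 _
      have hlt : q ^ (2 * l) < 1 := pow_lt_one₀ hq0.le hq1 (by omega)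
      exact pow_lt_one₀ (by linarith) (by linarith) hr.ne'
  have hbase_nonneg : 0 ≤ (1 - q ^ (2 * l)) ^ r :=
    pow_nonneg (sub_nonneg.mpr (pow_le_one₀ hq0.le hq1.le)) r
  unfold cCoeff
  nlinarith

theorem dCoeff_zero_right (q : ℝ) (r k : ℕ) : dCoeff q r k 0 = 0 := if_pos rfl

theorem IndexSet.eq_zero_of_bidiagonal {R : Type*} [Semiring R] [NoZeroDivisors R]
    {c d : ℕ → ℕ → R} (hc : ∀ k l, c k l ≠ 0) (hd : ∀ k, d k 0 = 0) {x : IndexSet → R}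
    (hx : ∀ (k l : ℕ) (h : l ≤ k),
      c k l * x ⟨(k, l), h⟩ + d (k - 1) (l - 1) * x ⟨(k - 1, l - 1), by omega⟩ = 0) :
    x = 0 := by
  suffices hrow : ∀ l k (h : l ≤ k), x ⟨(k, l), h⟩ = 0 by
    funext ⟨⟨k, l⟩, h⟩
    exact hrow l k h
  intro l
  induction l with
  | zero =>
    intro k h
    simpa [hd, hc] using hx k 0 h
  | succ l ih =>
    intro k h
    simpa [ih (k - 1) (by omega), hc] using hx k (l + 1) h

/-- Fix `0 < q < 1` and a positive integer `r` with
`q^(2r) < 1/2 < q^(2r-2)`.  Let `x` be a square-summable function on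
`I = {(k,l) ∈ ℕ × ℕ : l ≤ k}` such that for every `(k,l) ∈ I`,
`c(k,l)·x(k,l) + d(k-1,l-1)·x(k-1,l-1) = 0` (the second summand being `0` when `k = 0` or
`l = 0`, which is automatic here since `dCoeff q r (k-1) 0 = 0` and `l ≤ k`).  Then `x = 0`;
i.e. the operator `A` of the paper, given on the orthonormal basis by
`A f_{k,l} = c(k,l) f_{k,l} + d(k,l) f_{k+1,l+1}`, has trivial kernel. -/
theorem statement10 (q : ℝ) (hq0 : 0 < q) (hq1 : q < 1) (r : ℕ) (hr : 0 < r)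
    (x : IndexSet → ℂ)
    (hker : ∀ (k l : ℕ) (h : l ≤ k),
      (cCoeff q r k l : ℂ) * x ⟨(k, l), h⟩ +
        (dCoeff q r (k - 1) (l - 1) : ℂ) * x ⟨(k - 1, l - 1), by omega⟩ = 0) :
    x = 0 :=
  IndexSet.eq_zero_of_bidiagonal (d := fun k l => (dCoeff q r k l : ℂ))
    (fun k l => Complex.ofReal_ne_zero.mpr (cCoeff_pos hq0 hq1 hr k l).ne')
    (fun k => by rw [dCoeff_zero_right, Complex.ofReal_zero]) hker
end

section
/- Fix 0 < q < 1 and a positive integer r with q^{2r} < 1/2 < q^{2r−2}. Define the sequence (p_k)_{k ≥ 1} by p_1 = 1 and p_{k+1} = [1 − (1 − q^{2k})^r] / [(1 − q^{2k+2})^r · (1 − q^{2k})^{1/2}] · p_k for k ≥ 1. Then Σ_{k ≥ 1} p_k² < ∞; equivalently, the vector ξ on I = {(k,l) ∈ ℕ × ℕ : l ≤ k} given by ξ(k,k) = p_k for k ≥ 1 and ξ(k,l) = 0 otherwise belongs to ℓ²(I). -/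
/-- The sequence `(p_k)` of the paper: `p_1 = 1` and, for `k ≥ 1`,
`p_{k+1} = [1 - (1 - q^(2k))^r] / [(1 - q^(2k+2))^r (1 - q^(2k))^(1/2)] · p_k`
(we also set `p_0 = 0`, matching `ξ(0,0) = 0`). -/
noncomputable def pSeq (q : ℝ) (r : ℕ) : ℕ → ℝ
  | 0 => 0
  | 1 => 1
  | (k + 2) =>
    (1 - (1 - q ^ (2 * (k + 1))) ^ r) /
        ((1 - q ^ (2 * (k + 1) + 2)) ^ r * Real.sqrt (1 - q ^ (2 * (k + 1)))) *
      pSeq q r (k + 1)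

/-!
The ratio `p_{k+1} / p_k` is a continuous function of `t = q^(2k)` which vanishes at `t = 0`
(its numerator is `1 - (1 - t)^r`), so it tends to `0` as `k → ∞`. Hence eventually
`p_{k+1}² ≤ p_k² / 2`, and `∑ p_k²` converges by the ratio test; `ξ` is `p` transported along
the diagonal `k ↦ (k, k)` of `I`.
-/

open Filter Topology

theorem summable_sq_of_succ_eq_mul {p a : ℕ → ℝ} (hp : ∀ k, p (k + 1) = a k * p k)
    (ha : Tendsto a atTop (𝓝 0)) : Summable fun k => p k ^ 2 := by
  have ha_sq : Tendsto (fun k => a k ^ 2) atTop (𝓝 0) := by simpa using ha.pow 2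
  refine summable_of_ratio_norm_eventually_le (r := 1 / 2) (by norm_num) ?_
  filter_upwards [ha_sq.eventually_le_const (by norm_num : (0 : ℝ) < 1 / 2)] with k hk
  rw [Real.norm_of_nonneg (sq_nonneg _), Real.norm_of_nonneg (sq_nonneg _), hp, mul_pow]
  exact mul_le_mul_of_nonneg_right hk (sq_nonneg _)

noncomputable def pRatio (q : ℝ) (r : ℕ) (t : ℝ) : ℝ :=
  (1 - (1 - t) ^ r) / ((1 - q ^ 2 * t) ^ r * Real.sqrt (1 - t))

theorem pSeq_add_two (q : ℝ) (r k : ℕ) :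
    pSeq q r (k + 2) = pRatio q r ((q ^ 2) ^ (k + 1)) * pSeq q r (k + 1) := by
  rw [pSeq, pRatio, ← pow_mul, ← pow_add, add_comm 2]

theorem continuousAt_pRatio_zero (q : ℝ) (r : ℕ) : ContinuousAt (pRatio q r) 0 :=
  ContinuousAt.div (by fun_prop) (by fun_prop) (by simp)

theorem pRatio_zero (q : ℝ) (r : ℕ) : pRatio q r 0 = 0 := by
  simp [pRatio]

theorem tendsto_pRatio_atTop {q : ℝ} (hq0 : 0 < q) (hq1 : q < 1) (r : ℕ) :
    Tendsto (fun k : ℕ => pRatio q r ((q ^ 2) ^ (k + 1))) atTop (𝓝 0) := by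
  have hpow : Tendsto (fun k : ℕ => (q ^ 2) ^ (k + 1)) atTop (𝓝 0) :=
    (tendsto_add_atTop_iff_nat 1).mpr <|
      tendsto_pow_atTop_nhds_zero_of_lt_one (sq_nonneg q) (pow_lt_one₀ hq0.le hq1 two_ne_zero)
  simpa only [pRatio_zero q r, Function.comp_def] using
    (continuousAt_pRatio_zero q r).tendsto.comp hpow

theorem summable_pSeq_succ_sq {q : ℝ} (hq0 : 0 < q) (hq1 : q < 1) (r : ℕ) :
    Summable fun k : ℕ => pSeq q r (k + 1) ^ 2 :=
  summable_sq_of_succ_eq_mul (pSeq_add_two q r) (tendsto_pRatio_atTop hq0 hq1 r)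

def IndexSet.diag (k : ℕ) : IndexSet := ⟨(k, k), le_rfl⟩

theorem IndexSet.diag_injective : Function.Injective IndexSet.diag :=
  fun _ _ h => congrArg (fun i : IndexSet => i.1.1) h

theorem memℓp_two_of_diag {E : Type*} [NormedAddCommGroup E] {ξ : IndexSet → E}
    (hξ : ∀ i : IndexSet, i.1.2 ≠ i.1.1 → ξ i = 0)
    (hsum : Summable fun k => ‖ξ (IndexSet.diag k)‖ ^ 2) : Memℓp ξ 2 := by
  have hoff : ∀ i ∉ Set.range IndexSet.diag, ‖ξ i‖ ^ (2 : ℝ) = 0 := by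
    rintro ⟨⟨k, l⟩, hlk⟩ hi
    have hne : l ≠ k := by
      rintro rfl
      exact hi ⟨l, rfl⟩
    simp [hξ ⟨(k, l), hlk⟩ hne]
  rw [memℓp_gen_iff (by norm_num), ENNReal.toReal_ofNat,
    ← IndexSet.diag_injective.summable_iff hoff]
  simpa [Function.comp_def, Real.rpow_two] using hsum

theorem statement12_general (q : ℝ) (hq0 : 0 < q) (hq1 : q < 1) (r : ℕ) :
    (Summable fun k : ℕ => (pSeq q r (k + 1)) ^ 2) ∧
      Memℓp (fun i : IndexSet =>
        (if i.1.2 = i.1.1 then (pSeq q r i.1.1 : ℂ) else 0)) 2 := by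
  have hsucc := summable_pSeq_succ_sq hq0 hq1 r
  refine ⟨hsucc, memℓp_two_of_diag (fun i hi => if_neg hi) ?_⟩
  have hsum : Summable fun k => pSeq q r k ^ 2 := (summable_nat_add_iff 1).mp hsucc
  simpa [IndexSet.diag, Complex.norm_real] using hsum

/-- Fix `0 < q < 1` and a positive integer `r` with
`q^(2r) < 1/2 < q^(2r-2)`.  Define `(p_k)_{k ≥ 1}` by `p_1 = 1` and
`p_{k+1} = [1 - (1 - q^(2k))^r] / [(1 - q^(2k+2))^r (1 - q^(2k))^(1/2)] · p_k` for `k ≥ 1`.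
Then `∑_{k ≥ 1} p_k² < ∞`; equivalently, the vector `ξ` on `I = {(k,l) ∈ ℕ × ℕ : l ≤ k}` with
`ξ(k,k) = p_k` for `k ≥ 1` and `ξ(k,l) = 0` otherwise belongs to `ℓ²(I)`. -/
theorem statement12 (q : ℝ) (hq0 : 0 < q) (hq1 : q < 1) (r : ℕ) (hr : 0 < r)
    (hr1 : q ^ (2 * r) < 1 / 2) (hr2 : 1 / 2 < q ^ (2 * r - 2)) :
    (Summable fun k : ℕ => (pSeq q r (k + 1)) ^ 2) ∧
      Memℓp (fun i : IndexSet =>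
        (if i.1.2 = i.1.1 then (pSeq q r i.1.1 : ℂ) else 0)) 2 :=
  statement12_general q hq0 hq1 r
end
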